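/- For k ≥ 2, deleting the vertex a_1 (and all incident edges) from Δ^L_{k,1} yields a graph in which the distance between c and b_{k+1} is exactly 3; in particular, the resulting graph has diameter at least 3. -/

import Mathlib

inductive V (k n : ℕ) where
  | c : V k n
  | a : Fin k → V k n
  | b : Fin (k + n) → V k n
deriving DecidableEq, Fintype

def adj (k n : ℕ) : V k n → V k n → Prop
  | .a i, .a j => i ≠ j
  | .b i, .b j => i ≠ j
  | .a i, .b j => (j : ℕ) = (i : ℕ) ∨ (j : ℕ) = k + i
  | .b j, .a i => (j : ℕ) = (i : ℕ) ∨ (j : ℕ) = k + i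
  | .c, .a _ => True
  | .a _, .c => True
  | _, _ => False

instance (k n : ℕ) : DecidableRel (adj k n) := fun x y => by
  cases x <;> cases y <;> simp only [adj] <;> infer_instance

def DeltaL (k n : ℕ) : SimpleGraph (V k n) where
  Adj := adj k n
  symm := by
    constructor
    intro x y h
    cases x <;> cases y <;> simp_all [adj] <;> tauto
  loopless := by
    constructor
    intro x h
    cases x <;> simp_all [adj]

/-! Every neighbour of `c` is some `a_i`, and the only `a_i` adjacent to `b_{k+1}` is `a_1`, so
deleting `a_1` leaves `c` and `b_{k+1}` without a common neighbour; they are not adjacent either, so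
their distance is at least 3, and the path `c, a_2, b_2, b_{k+1}` attains it. Indices are shifted
by one in the code: `a_1` is `V.a ⟨0, _⟩` and `b_{k+1}` is `V.b ⟨k, _⟩`. -/

namespace SimpleGraph

variable {W : Type*} {G : SimpleGraph W} {u v : W}

theorem dist_eq_three_of_walk (p : G.Walk u v) (hp : p.length = 3) (hne : u ≠ v)
    (hnadj : ¬G.Adj u v) (hcommon : G.commonNeighbors u v = ∅) : G.dist u v = 3 := by
  have hlt : 2 < G.edist u v := two_lt_edist_iff.mpr ⟨hne, hnadj, hcommon⟩
  have hle : G.dist u v ≤ 3 := hp ▸ dist_le p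
  rw [← p.reachable.coe_dist_eq_edist] at hlt
  exact le_antisymm hle (by exact_mod_cast hlt)

end SimpleGraph

open SimpleGraph

theorem DeltaL.eq_a_zero_of_adj_c_of_adj_b {k n : ℕ} (hkn : k < k + n) {x : V k n}
    (hc : (DeltaL k n).Adj .c x) (hb : (DeltaL k n).Adj x (.b ⟨k, hkn⟩)) :
    ∃ h : 0 < k, x = .a ⟨0, h⟩ := by
  cases x with
  | c => exact hc.elim
  | b j => exact hc.elim
  | a i =>
    have hi : k = (i : ℕ) ∨ k = k + i := hb
    exact ⟨i.pos, congrArg V.a (Fin.ext (show (i : ℕ) = 0 by omega))⟩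

theorem stmt5 (k : ℕ) (hk : 2 ≤ k) :
    (((DeltaL k 1).induce {x : V k 1 | x ≠ V.a ⟨0, by omega⟩}).dist
        ⟨V.c, by simp⟩ ⟨V.b ⟨k, by omega⟩, by simp⟩ = 3) ∧
    (∃ u v : {x : V k 1 | x ≠ V.a ⟨0, by omega⟩},
      3 ≤ ((DeltaL k 1).induce {x : V k 1 | x ≠ V.a ⟨0, by omega⟩}).dist u v) := by
  set G := (DeltaL k 1).induce {x : V k 1 | x ≠ V.a ⟨0, by omega⟩}
  have hdist : G.dist ⟨V.c, by simp⟩ ⟨V.b ⟨k, by omega⟩, by simp⟩ = 3 := by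
    let a₂ : {x : V k 1 | x ≠ V.a ⟨0, by omega⟩} := ⟨V.a ⟨1, by omega⟩, by simp⟩
    let b₂ : {x : V k 1 | x ≠ V.a ⟨0, by omega⟩} := ⟨V.b ⟨1, by omega⟩, by simp⟩
    have hb₂ : G.Adj b₂ ⟨V.b ⟨k, by omega⟩, by simp⟩ := Fin.ne_of_val_ne (show 1 ≠ k by omega)
    refine dist_eq_three_of_walk (.cons (v := a₂) trivial (.cons (v := b₂) (.inl rfl)
      (.cons hb₂ .nil))) rfl (by simp) id ?_
    refine Set.eq_empty_of_forall_notMem fun ⟨x, hx⟩ hcommon => ?_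
    obtain ⟨_, rfl⟩ := DeltaL.eq_a_zero_of_adj_c_of_adj_b _ hcommon.1 hcommon.2.symm
    exact hx rfl
  exact ⟨hdist, _, _, hdist.ge⟩
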